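/- arXiv:2302.05634 — 6 statements merged into one kernel-verified Lean document; each statement's English description precedes it below -/
import Mathlib

section
/- Suppose κ is an infinite cardinal, λ > κ is a regular cardinal, and for each α < λ we have |α^{<κ}| < λ. If 𝒜 is a collection of sets with |𝒜| ≥ λ and every member of 𝒜 has cardinality < κ, then there is a subcollection ℬ ⊆ 𝒜 with |ℬ| = λ forming a Δ-system, i.e. there is a set r such that the intersection of any two distinct members of ℬ equals r. -/
/-!
Embed the union of `λ` members of `𝒜` into `λ`, so that the sets become small subsets of a
regular cardinal order `ι` of size `λ`, indexed by `ι` itself.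

First, some `a` has the property that for every `b`, `λ` many members avoid `[a, b)`. Otherwise
pick `g a` with fewer than `λ` members avoiding `[a, g a)`; choosing `a`'s greedily so that each
lies beyond `g` of the earlier ones gives `κ` pairwise disjoint intervals `[a, g a)`, and since
`λ` is regular some member meets all of them, so it has at least `κ` elements.

Next, choose members greedily, each avoiding `[a, b)` for `b` above all earlier members: this
yields `λ` members whose pairwise intersections lie below `a`. The traces of these members
below `a` are subsets of size `< κ` of `[0, a)`, so as `|a| ^< κ < λ` there are fewer
than `λ` of them; `λ` members share a trace `r`, and `r` is then the root of a Δ-system.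
-/

open Cardinal Order Set

universe u

theorem Cardinal.mk_subset_mk_lt_le {β : Type u} (s : Set β) (κ : Cardinal.{u}) :
    #{t : Set β // t ⊆ s ∧ #t < κ} ≤ κ * max #s ℵ₀ ^< κ := by
  have hunion : {t : Set β | t ⊆ s ∧ #t < κ} = ⋃ c : Iio κ, {t | t ⊆ s ∧ #t ≤ c} := by
    ext t
    simp only [mem_ofPred_eq, mem_iUnion, Subtype.exists, mem_Iio]
    exact ⟨fun h => ⟨#t, h.2, h.1, le_rfl⟩, fun ⟨c, hc, hts, htc⟩ => ⟨hts, htc.trans_lt hc⟩⟩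
  have hIio : lift.{u} #(Iio κ) ≤ lift.{u + 1} κ := by
    rw [lift_id'.{u, u + 1}]
    have := mk_le_of_injective (f := fun c : Iio κ => (⟨c.1.ord, ord_lt_ord.2 c.2⟩ : Iio κ.ord))
      fun a b h => Subtype.ext (ord_injective (congrArg Subtype.val h))
    rwa [mk_Iio_ordinal, card_ord] at this
  rw [← lift_le.{u + 1}, lift_mul]
  refine (hunion ▸ mk_iUnion_le_lift fun c : Iio κ => {t : Set β | t ⊆ s ∧ #t ≤ c}).trans
    (mul_le_mul' hIio (ciSup_le' fun c => ?_))
  rw [lift_le]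
  exact (mk_bounded_subset_le s c).trans (le_powerlt _ c.2)

theorem Set.PairwiseDisjoint.mk_le_of_forall_inter_nonempty {ι α : Type u} {s : Set ι}
    {f : ι → Set α} {x : Set α} (hf : s.PairwiseDisjoint f) (hx : ∀ i ∈ s, (x ∩ f i).Nonempty) :
    #s ≤ #x := by
  choose p hp using fun i : s => hx i i.2
  refine mk_le_of_injective (f := fun i => ⟨p i, (hp i).1⟩) fun i j hij => ?_
  by_contra hne
  exact (hf i.2 j.2 (Subtype.coe_injective.ne hne)).ne_of_mem (hp i).2 (hp j).2
    (congrArg Subtype.val hij)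

theorem exists_pairwise_inter_eq_of_pairwise_inter_subset {β α : Type u} {c κ : Cardinal.{u}}
    (hc : c.IsRegular) {D : β → Set α} (hD : ∀ i, #(D i) < κ) {S : Set β} (hS : c ≤ #S)
    {A : Set α} (hSA : S.Pairwise fun i j => D i ∩ D j ⊆ A)
    (hA : #{t : Set α // t ⊆ A ∧ #t < κ} < c) :
    ∃ T ⊆ S, c ≤ #T ∧ ∃ r, T.Pairwise fun i j => D i ∩ D j = r := by
  obtain ⟨r, T, hTS, hT, hTr⟩ := infinite_pigeonhole_set
    (fun i : S => (⟨D i ∩ A, inter_subset_right,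
      (mk_le_mk_of_subset inter_subset_left).trans_lt (hD i)⟩ : {t : Set α // t ⊆ A ∧ #t < κ}))
    c hS hc.aleph0_le (by rwa [hc.cof_ord])
  refine ⟨T, hTS, hT, r, fun i hi j hj hij => ?_⟩
  have htrace : ∀ k ∈ T, D k ∩ A = r := fun k hk => congrArg Subtype.val (hTr hk)
  change D i ∩ D j = r
  rw [← inter_eq_left.2 (hSA (hTS hi) (hTS hj) hij), inter_inter_distrib_right, htrace i hi,
    htrace j hj, inter_self]

theorem Set.pairwise_of_forall_lt {ι : Type*} [LinearOrder ι] {s : Set ι} {r : ι → ι → Prop}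
    (hr : ∀ ⦃i j⦄, r i j → r j i) (h : ∀ i ∈ s, ∀ j ∈ s, i < j → r i j) : s.Pairwise r :=
  fun i hi j hj hij => hij.lt_or_gt.elim (h i hi j hj) fun hji => hr (h j hj i hi hji)

section Greedy

variable {ι : Type*} [LinearOrder ι] [WellFoundedLT ι] (R : ι → ι → Prop)

def greedySet : Set ι :=
  {i | wellFounded_lt.fix (C := fun _ => Prop) (fun i IH => ∀ j (hj : j < i), IH j hj → R j i) i}

theorem mem_greedySet_iff {i : ι} : i ∈ greedySet R ↔ ∀ j < i, j ∈ greedySet R → R j i := by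
  rw [greedySet, mem_ofPred_eq, WellFounded.fix_eq]
  rfl

theorem le_mk_greedySet {c : Cardinal} (h : ∀ s : Set ι, #s < c → ∃ i, ∀ j ∈ s, j < i ∧ R j i) :
    c ≤ #(greedySet R) := by
  by_contra! hS
  obtain ⟨i, hi⟩ := h _ hS
  have hmem : i ∈ greedySet R := (mem_greedySet_iff R).2 fun j _ hj => (hi j hj).2
  exact (hi i hmem).1.false

end Greedy

theorem isRegularCardinalOrder_toType_ord {c : Cardinal} (h : c ≤ c.ord.cof) :
    IsRegularCardinalOrder c.ord.ToType :=
  ⟨by rwa [Ordinal.type_toType, Ordinal.cof_toType, ord_le_ord]⟩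

section RegularCardinalOrder

variable {ι : Type u} [LinearOrder ι] [WellFoundedLT ι] [IsRegularCardinalOrder ι]

theorem isRegular_cardinalMk (h : ℵ₀ ≤ #ι) : (#ι).IsRegular :=
  ⟨h, by rw [ord_cardinalMk, Ordinal.cof_type, cof_eq_cardinalMk]⟩

theorem exists_forall_lt_of_mk_lt {s : Set ι} (hs : #s < #ι) : ∃ b, ∀ x ∈ s, x < b :=
  not_isCofinal_iff.1 fun h => (cof_le h).not_gt (cof_eq_cardinalMk (α := ι) ▸ hs)

variable {κ : Cardinal.{u}}

theorem exists_forall_le_mk_disjoint_Ico (hι : ℵ₀ ≤ #ι) (hκ : κ < #ι) {β : Type u}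
    (hβ : #ι ≤ #β) (D : β → Set ι) (hD : ∀ i, #(D i) < κ) :
    ∃ a, ∀ b, #ι ≤ #{i | Disjoint (D i) (Ico a b)} := by
  by_contra! h
  choose g hg using h
  set S := greedySet fun j i => g j ≤ i
  have hS : #ι ≤ #S := le_mk_greedySet _ fun s hs => by
    obtain ⟨i, hi⟩ := exists_forall_lt_of_mk_lt (s := s ∪ g '' s)
      ((mk_union_le _ _).trans_lt (add_lt_of_lt hι hs (mk_image_le.trans_lt hs)))
    exact ⟨i, fun j hj => ⟨hi j (Or.inl hj), (hi _ (Or.inr ⟨j, hj, rfl⟩)).le⟩⟩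
  obtain ⟨S', hS'S, hS'κ⟩ := le_mk_iff_exists_subset.1 (hκ.le.trans hS)
  have hE : #(⋃ a ∈ S', {i | Disjoint (D i) (Ico a (g a))}) < #ι :=
    (card_biUnion_lt_iff_forall_of_isRegular (isRegular_cardinalMk hι) (hS'κ ▸ hκ)).2
      fun a _ => hg a
  obtain ⟨i, hi⟩ : ∃ i, i ∉ ⋃ a ∈ S', {i | Disjoint (D i) (Ico a (g a))} := by
    by_contra! h
    exact (hE.trans_le hβ).not_ge (mk_univ.symm.le.trans (mk_le_mk_of_subset fun i _ => h i))
  have hdisj : S'.PairwiseDisjoint fun a => Ico a (g a) :=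
    pairwise_of_forall_lt (fun _ _ h => h.symm) fun a ha b hb hab =>
      (Iio_disjoint_Ici ((mem_greedySet_iff _).1 (hS'S hb) a hab (hS'S ha))).mono
        Ico_subset_Iio_self Ico_subset_Ici_self
  have hmeet : ∀ a ∈ S', (D i ∩ Ico a (g a)).Nonempty := fun a ha =>
    not_disjoint_iff_nonempty_inter.1 fun h => hi (mem_biUnion ha h)
  exact (hD i).not_ge (hS'κ ▸ hdisj.mk_le_of_forall_inter_nonempty hmeet)

theorem exists_pairwise_inter_subset_Iio (hι : ℵ₀ ≤ #ι) (hκ : κ < #ι) (D : ι → Set ι)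
    (hD : ∀ i, #(D i) < κ) :
    ∃ a, ∃ S : Set ι, #ι ≤ #S ∧ S.Pairwise fun i j => D i ∩ D j ⊆ Iio a := by
  obtain ⟨a, ha⟩ := exists_forall_le_mk_disjoint_Ico hι hκ le_rfl D hD
  choose b hb using fun j => exists_forall_lt_of_mk_lt ((hD j).trans hκ)
  set S := greedySet fun j i => Disjoint (D i) (Ico a (b j))
  have hS : #ι ≤ #S := le_mk_greedySet _ fun s hs => by
    obtain ⟨c, hc⟩ := exists_forall_lt_of_mk_lt (mk_image_le.trans_lt hs : #(b '' s) < #ι)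
    obtain ⟨d, hd⟩ := exists_forall_lt_of_mk_lt hs
    obtain ⟨i, hi, hdi⟩ : ∃ i ∈ {i | Disjoint (D i) (Ico a c)}, d ≤ i := by
      by_contra! h
      exact ((ha c).trans (mk_le_mk_of_subset h)).not_gt (mk_Iio_lt d ord_cardinalMk)
    exact ⟨i, fun j hj => ⟨(hd j hj).trans_le hdi,
      hi.mono_right (Ico_subset_Ico_right (hc _ ⟨j, hj, rfl⟩).le)⟩⟩
  refine ⟨a, S, hS, pairwise_of_forall_lt (fun i j h => inter_comm (D i) (D j) ▸ h)
    fun j hj i hi hji x hx => not_le.1 fun hax => ?_⟩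
  exact disjoint_left.1 ((mem_greedySet_iff _).1 hi j hji hj) hx.2 ⟨hax, hb j x hx.1⟩

theorem exists_pairwise_inter_eq (hκ₀ : ℵ₀ ≤ κ) (hκ : κ < #ι) (hpow : ∀ c < #ι, c ^< κ < #ι)
    (D : ι → Set ι) (hD : ∀ i, #(D i) < κ) :
    ∃ T : Set ι, #T = #ι ∧ ∃ r, T.Pairwise fun i j => D i ∩ D j = r := by
  have hι : ℵ₀ ≤ #ι := hκ₀.trans hκ.le
  obtain ⟨a, S, hS, hSa⟩ := exists_pairwise_inter_subset_Iio hι hκ D hD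
  have htraces : #{t : Set ι // t ⊆ Iio a ∧ #t < κ} < #ι :=
    (mk_subset_mk_lt_le _ κ).trans_lt <| mul_lt_of_lt hι hκ <|
      hpow _ (max_lt (mk_Iio_lt a ord_cardinalMk) (hκ₀.trans_lt hκ))
  obtain ⟨T, -, hT, hr⟩ :=
    exists_pairwise_inter_eq_of_pairwise_inter_subset (isRegular_cardinalMk hι) hD hS hSa htraces
  exact ⟨T, (mk_set_le T).antisymm hT, hr⟩

end RegularCardinalOrder

/-- **Δ-system lemma.** If `κ` is infinite, `λ > κ` is regular, `a ^< κ < λ` for all `a < λ`,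
and `𝒜` is a family of at least `λ` many sets each of size `< κ`, then there is a
subfamily `ℬ ⊆ 𝒜` of size `λ` forming a Δ-system. -/
theorem delta_system_lemma {α : Type u} (κ lam : Cardinal.{u}) (hκ : ℵ₀ ≤ κ)
    (hreg : lam.IsRegular) (hκlam : κ < lam)
    (hpow : ∀ a : Cardinal.{u}, a < lam → a ^< κ < lam)
    (𝒜 : Set (Set α)) (h𝒜 : lam ≤ #𝒜) (hsmall : ∀ x ∈ 𝒜, #x < κ) :
    ∃ ℬ ⊆ 𝒜, #ℬ = lam ∧ ∃ r : Set α, ∀ x ∈ ℬ, ∀ y ∈ ℬ, x ≠ y → x ∩ y = r := by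
  have := isRegularCardinalOrder_toType_ord hreg.2
  have hι : #lam.ord.ToType = lam := mk_ord_toType lam
  obtain ⟨D⟩ : Nonempty (lam.ord.ToType ↪ 𝒜) := by rwa [← le_def, hι]
  set U := ⋃ i, (D i : Set α)
  have hDU : ∀ i, (D i : Set α) ⊆ U := subset_iUnion (fun i => (D i : Set α))
  have hU : #U ≤ lam := calc
    #U ≤ #lam.ord.ToType * ⨆ i, #(D i : Set α) := mk_iUnion_le _
    _ ≤ lam * κ := mul_le_mul' hι.le (ciSup_le' fun i => (hsmall _ (D i).2).le)
    _ = lam := Cardinal.mul_eq_left hreg.aleph0_le hκlam.le (aleph0_pos.trans_le hκ).ne'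
  have : Nonempty lam.ord.ToType := mk_ne_zero_iff.1 (by rw [hι]; exact hreg.ne_zero)
  obtain ⟨f, hf⟩ : ∃ f : α → lam.ord.ToType, InjOn f U := by
    obtain ⟨g⟩ : Nonempty (U ↪ lam.ord.ToType) := by rwa [← le_def, hι]
    exact exists_injOn_iff_injective.2 ⟨g, g.injective⟩
  obtain ⟨T, hT, r, hr⟩ := exists_pairwise_inter_eq hκ (by rwa [hι]) (by rwa [hι])
    (fun i => f '' D i) fun i => mk_image_le.trans_lt (hsmall _ (D i).2)
  refine ⟨(fun i => (D i : Set α)) '' T, ?_, ?_, f ⁻¹' r ∩ U, ?_⟩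
  · rintro _ ⟨i, -, rfl⟩
    exact (D i).2
  · rw [mk_image_eq fun i j h => D.injective (Subtype.ext h), hT, hι]
  · rintro _ ⟨i, hi, rfl⟩ _ ⟨j, hj, rfl⟩ hne
    rw [← hr hi hj (ne_of_apply_ne (fun i => (D i : Set α)) hne),
      ← hf.image_inter (hDU i) (hDU j), hf.preimage_image_inter (inter_subset_left.trans (hDU i))]
end

section
/- Let γ₀ ≤ γ₁ be ordinals and let (p_α)_{α<γ₀} and (q_α)_{α<γ₁} be families of partial functions from λ to 2, each of size < κ. Suppose that (q_α)_{α<γ₁} forms a Δ-system, and for each α < β < γ₀ the pairs (p_α, p_β) and (q_α, q_β) are isomorphic, meaning the unique order isomorphism between dom(p_α) ∪ dom(p_β) and dom(q_α) ∪ dom(q_β) carries p_α to q_α and p_β to q_β. Then (p_α)_{α<γ₀} also forms a Δ-system. -/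
open Cardinal

/-- The domain of a Cohen condition (a partial function into `2`). -/
def condDom {T : Type u} (p : T → Option (Fin 2)) : Set T := {x | p x ≠ none}

/-- The graph of a Cohen condition, as a set of ordered pairs. -/
def condGraph {T : Type u} (p : T → Option (Fin 2)) : Set (T × Fin 2) :=
  {xb | p xb.1 = some xb.2}

/-- Two pairs of conditions are isomorphic: the (unique) order isomorphism between
`dom p₁ ∪ dom p₂` and `dom q₁ ∪ dom q₂` carries `p₁` to `q₁` and `p₂` to `q₂`. -/
def PairIso {T : Type u} [LinearOrder T] (p₁ p₂ q₁ q₂ : T → Option (Fin 2)) : Prop :=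
  ∃ e : ↥(condDom p₁ ∪ condDom p₂) ≃o ↥(condDom q₁ ∪ condDom q₂),
    ∀ x : ↥(condDom p₁ ∪ condDom p₂), p₁ x = q₁ (e x) ∧ p₂ x = q₂ (e x)

/-!
Order isomorphisms between well-orders are unique. Hence the isomorphism of `(p_α, p_β)` with
`(q_α, q_β)` restricts to *the* isomorphism `dom p_α ≃o dom q_α`, and `p_α ∩ p_β` is the pullback
of `q_α ∩ q_β = r` along it: it depends on `α` alone. Restricting to `dom p_β` instead, it depends
on `β` alone, and a function of increasing pairs depending on each coordinate separately is
constant.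
-/

theorem OrderIso.exists_restrict_of_mem_iff {T : Type u} [LinearOrder T] {s t A C : Set T}
    (e : s ≃o t) (hA : A ⊆ s) (hC : C ⊆ t) (h : ∀ x : s, (x : T) ∈ A ↔ (e x : T) ∈ C) :
    ∃ g : A ≃o C, ∀ x : A, (g x : T) = e ⟨x, hA x.2⟩ := by
  let f : A → C := fun x => ⟨e ⟨x, hA x.2⟩, (h _).1 x.2⟩
  have hf : StrictMono f := fun x y hxy =>
    e.strictMono (show (⟨x, hA x.2⟩ : s) < ⟨y, hA y.2⟩ from hxy)
  have hsurj : Function.Surjective f := by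
    intro y
    have hy : ((e.symm ⟨y, hC y.2⟩ : s) : T) ∈ A := (h _).2 (by simp)
    exact ⟨⟨_, hy⟩, Subtype.ext (by simp [f])⟩
  exact ⟨hf.orderIsoOfSurjective f hsurj, fun _ => rfl⟩

section PairIso

variable {T : Type u} [LinearOrder T]

/-- The pullback of `r` along the order isomorphism `condDom p ≃o condDom q`. Quantifying over
`f` avoids choosing one; there is at most one when `T` is well-ordered. -/
def isoPreimage (p q : T → Option (Fin 2)) (r : Set (T × Fin 2)) : Set (T × Fin 2) :=
  {xv | ∃ (f : condDom p ≃o condDom q) (hx : xv.1 ∈ condDom p), ((f ⟨xv.1, hx⟩ : T), xv.2) ∈ r}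

theorem PairIso.swap {p₁ p₂ q₁ q₂ : T → Option (Fin 2)} (h : PairIso p₁ p₂ q₁ q₂) :
    PairIso p₂ p₁ q₂ q₁ := by
  obtain ⟨e, he⟩ := h
  refine ⟨(OrderIso.setCongr _ _ (Set.union_comm _ _)).trans
    (e.trans (OrderIso.setCongr _ _ (Set.union_comm _ _))), fun x => ?_⟩
  exact (he ⟨x, Or.symm x.2⟩).symm

theorem PairIso.condGraph_inter_eq_isoPreimage_fst [WellFoundedLT T]
    {p₁ p₂ q₁ q₂ : T → Option (Fin 2)} (h : PairIso p₁ p₂ q₁ q₂) :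
    condGraph p₁ ∩ condGraph p₂ = isoPreimage p₁ q₁ (condGraph q₁ ∩ condGraph q₂) := by
  obtain ⟨e, he⟩ := h
  obtain ⟨g, hg⟩ := e.exists_restrict_of_mem_iff Set.subset_union_left Set.subset_union_left
    fun x => by simp only [condDom, Set.mem_ofPred_eq, (he x).1]
  ext ⟨x, v⟩
  constructor
  · rintro ⟨h₁ : p₁ x = some v, h₂ : p₂ x = some v⟩
    have hx : x ∈ condDom p₁ := by simp [condDom, h₁]
    refine ⟨g, hx, ?_, ?_⟩
    · show q₁ _ = _
      rw [hg]
      exact ((he _).1).symm.trans h₁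
    · show q₂ _ = _
      rw [hg]
      exact ((he _).2).symm.trans h₂
  · rintro ⟨f, hx, hf⟩
    obtain rfl : f = g := Subsingleton.elim _ _
    obtain ⟨hf₁ : q₁ _ = some v, hf₂ : q₂ _ = some v⟩ := hf
    rw [hg] at hf₁ hf₂
    exact ⟨((he _).1).trans hf₁, ((he _).2).trans hf₂⟩

theorem PairIso.condGraph_inter_eq_isoPreimage_snd [WellFoundedLT T]
    {p₁ p₂ q₁ q₂ : T → Option (Fin 2)} (h : PairIso p₁ p₂ q₁ q₂) :
    condGraph p₁ ∩ condGraph p₂ = isoPreimage p₂ q₂ (condGraph q₁ ∩ condGraph q₂) := by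
  rw [Set.inter_comm, h.swap.condGraph_inter_eq_isoPreimage_fst, Set.inter_comm]

end PairIso

theorem exists_eq_of_eq_fst_of_eq_snd {α β : Type*} [LinearOrder α] {γ : α} {F : α → α → β}
    {L R : α → β} (hL : ∀ a b, a < b → b < γ → F a b = L a)
    (hR : ∀ a b, a < b → b < γ → F a b = R b) :
    ∃ r, ∀ a b, a < b → b < γ → F a b = r := by
  by_cases hpair : ∃ a₀ b₀, a₀ < b₀ ∧ b₀ < γ
  · obtain ⟨a₀, b₀, hab₀, hb₀⟩ := hpair
    refine ⟨F a₀ b₀, fun a b hab hb => ?_⟩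
    have hm : max b b₀ < γ := max_lt hb hb₀
    have ham : a < max b b₀ := hab.trans_le (le_max_left _ _)
    have ham₀ : a₀ < max b b₀ := hab₀.trans_le (le_max_right _ _)
    calc F a b = L a := hL a b hab hb
      _ = R (max b b₀) := (hL a _ ham hm).symm.trans (hR a _ ham hm)
      _ = L a₀ := (hR a₀ _ ham₀ hm).symm.trans (hL a₀ _ ham₀ hm)
      _ = F a₀ b₀ := (hL a₀ b₀ hab₀ hb₀).symm
  · -- `F γ γ` only serves to inhabit `β`
    exact ⟨F γ γ, fun a b hab hb => (hpair ⟨a, b, hab, hb⟩).elim⟩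

theorem delta_system_from_iso_general (lam : Cardinal.{u}) (γ₀ γ₁ : Ordinal.{u}) (hγ : γ₀ ≤ γ₁)
    (p q : Ordinal.{u} → lam.ord.ToType → Option (Fin 2))
    (hqΔ : ∃ r, ∀ a b, a < b → b < γ₁ → condGraph (q a) ∩ condGraph (q b) = r)
    (hiso : ∀ a b, a < b → b < γ₀ → PairIso (p a) (p b) (q a) (q b)) :
    ∃ r, ∀ a b, a < b → b < γ₀ → condGraph (p a) ∩ condGraph (p b) = r := by
  obtain ⟨r, hr⟩ := hqΔ
  refine exists_eq_of_eq_fst_of_eq_snd (L := fun a => isoPreimage (p a) (q a) r)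
    (R := fun b => isoPreimage (p b) (q b) r) (fun a b hab hb => ?_) (fun a b hab hb => ?_)
  · rw [(hiso a b hab hb).condGraph_inter_eq_isoPreimage_fst, hr a b hab (hb.trans_le hγ)]
  · rw [(hiso a b hab hb).condGraph_inter_eq_isoPreimage_snd, hr a b hab (hb.trans_le hγ)]

/-- If `(q_α)_{α<γ₁}` is a Δ-system of conditions in `Add(κ, λ)` and for all `α < β < γ₀ ≤ γ₁`
the pair `(p_α, p_β)` is isomorphic to `(q_α, q_β)`, then `(p_α)_{α<γ₀}` is a Δ-system. -/
theorem delta_system_from_iso (κ lam : Cardinal.{u}) (γ₀ γ₁ : Ordinal.{u}) (hγ : γ₀ ≤ γ₁)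
    (p q : Ordinal.{u} → lam.ord.ToType → Option (Fin 2))
    (hpsize : ∀ a, a < γ₀ → #(condDom (p a)) < κ)
    (hqsize : ∀ a, a < γ₁ → #(condDom (q a)) < κ)
    (hqΔ : ∃ r, ∀ a b, a < b → b < γ₁ → condGraph (q a) ∩ condGraph (q b) = r)
    (hiso : ∀ a b, a < b → b < γ₀ → PairIso (p a) (p b) (q a) (q b)) :
    ∃ r, ∀ a b, a < b → b < γ₀ → condGraph (p a) ∩ condGraph (p b) = r :=
  delta_system_from_iso_general lam γ₀ γ₁ hγ p q hqΔ hiso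
end

section
/- For every infinite cardinal κ, the Dushnik–Miller relation κ → (κ, ω)² holds: for every coloring c : [κ]² → 2, either there is a set X ⊆ κ of cardinality κ with c constantly 0 on [X]², or there is an infinite set Y ⊆ κ with c constantly 1 on [Y]². -/
/-!
Let `G` be the graph of pairs coloured `1` and suppose it has no infinite clique. Every set `A`
then has a subset of size `#A` in which all vertices have fewer than `#A` neighbours: otherwise
one could keep choosing a vertex of large degree and passing to its neighbourhood, which builds an
infinite clique. When `#A` is regular, a maximal independent subset of such a set has size `#A`,
because fewer than `#A` vertices together with their neighbourhoods cannot cover it.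

When `κ = #α` is singular, choose regular cardinals `μ i` (`i < cf κ`) above `cf κ`, cofinal in
`κ`, and independent sets `D i` of size `μ i` whose neighbourhoods have size below `κ` (a
pigeonhole over a cofinal sequence of length `cf κ` bounds their degrees uniformly), growing so
fast that each neighbourhood of `D j` is smaller than every later `μ i`. Removing from each `D i`
the neighbourhoods of the earlier `D j` leaves sets of size `μ i` whose union is independent of
size `κ`.
-/

open Cardinal Set Order Function

universe u

namespace Cardinal

theorem mk_sdiff_eq_of_mk_inter_lt {α : Type u} {s t : Set α} (hs : ℵ₀ ≤ #s)
    (h : #(s ∩ t : Set α) < #s) : #(s \ t : Set α) = #s := by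
  refine (mk_le_mk_of_subset sdiff_subset).antisymm (not_lt.1 fun hlt => ?_)
  have := mk_sdiff_add_mk (inter_subset_left : s ∩ t ⊆ s)
  rw [sdiff_self_inter] at this
  exact (add_lt_of_lt hs hlt h).ne this

theorem exists_cofinal_family (κ : Cardinal.{u}) :
    ∃ θ : κ.ord.cof.ord.ToType → Cardinal.{u}, (∀ i, θ i < κ) ∧ ∀ m < κ, ∃ i, m ≤ θ i := by
  obtain ⟨f, hf⟩ := Ordinal.exists_isFundamentalSeq (o := κ.ord) rfl
  refine ⟨fun i => (f (Ordinal.ToType.mk.symm i)).1.card, fun i => lt_ord.1 (f _).2,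
    fun m hm => ?_⟩
  obtain ⟨_, ⟨j, rfl⟩, hj⟩ := hf.isCofinal_range ⟨m.ord, ord_lt_ord.2 hm⟩
  exact ⟨Ordinal.ToType.mk j, by simpa using ord_le.1 (Subtype.coe_le_coe.2 hj)⟩

theorem IsSingular.exists_isRegular_family {κ : Cardinal.{u}} (hκ : κ.IsSingular)
    (g : Cardinal.{u} → Cardinal.{u}) (hg : ∀ m, m.IsRegular → κ.ord.cof < m → m < κ → g m < κ) :
    ∃ μ : κ.ord.cof.ord.ToType → Cardinal.{u},
      (∀ i, (μ i).IsRegular ∧ κ.ord.cof < μ i ∧ μ i < κ) ∧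
      (∀ ⦃i j⦄, j < i → g (μ j) < μ i) ∧ ∀ m < κ, ∃ i, m < μ i := by
  obtain ⟨θ, hθκ, hθ⟩ := exists_cofinal_family κ
  let μ : κ.ord.cof.ord.ToType → Cardinal.{u} := WellFoundedLT.fix fun i μ =>
    succ (κ.ord.cof ⊔ θ i ⊔ ⨆ j : Iio i, g (μ j j.2))
  have hμ (i) : μ i = succ (κ.ord.cof ⊔ θ i ⊔ ⨆ j : Iio i, g (μ j)) := WellFoundedLT.fix_eq _ i
  have hbound (i) : κ.ord.cof ⊔ θ i ⊔ ⨆ j : Iio i, g (μ j) < μ i := hμ i ▸ lt_succ _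
  have hreg (i) : (μ i).IsRegular :=
    hμ i ▸ isRegular_succ ((isRegular_cof (isSuccLimit_ord hκ.aleph0_le)).aleph0_le.trans
      (le_sup_left.trans le_sup_left))
  have hcof (i) : κ.ord.cof < μ i := (le_sup_left.trans le_sup_left).trans_lt (hbound i)
  have hgμ ⦃i j⦄ (hji : j < i) : g (μ j) < μ i :=
    ((le_ciSup bddAbove_of_small (⟨j, hji⟩ : Iio i)).trans le_sup_right).trans_lt (hbound i)
  have hμκ (i) : μ i < κ := by
    induction i using WellFoundedLT.induction with
    | _ i ih =>
      rw [hμ i]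
      refine hκ.isSuccLimit.succ_lt (sup_lt_iff.2 ⟨sup_lt_iff.2 ⟨hκ.cof_ord_lt, hθκ i⟩, ?_⟩)
      refine iSup_lt_of_lt_cof_ord ?_ fun j => hg _ (hreg j) (hcof j) (ih j j.2)
      simpa using mk_Iio_lt i
  refine ⟨μ, fun i => ⟨hreg i, hcof i, hμκ i⟩, hgμ, fun m hm => ?_⟩
  obtain ⟨i, hi⟩ := hθ m hm
  exact ⟨i, hi.trans_lt ((le_sup_right.trans le_sup_left).trans_lt (hbound i))⟩

end Cardinal

namespace SimpleGraph

variable {α : Type u} {G : SimpleGraph α}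

theorem exists_isClique_infinite_of_forall_exists (P : Set α → Prop) {A : Set α} (hA : P A)
    (hP : ∀ S, P S → ∃ x ∈ S, P (G.neighborSet x ∩ S)) :
    ∃ Y : Set α, Y.Infinite ∧ G.IsClique Y := by
  have : Nonempty α := let ⟨x, _⟩ := hP A hA; ⟨x⟩
  choose! pick hpick_mem hpick using hP
  let S : ℕ → Set α := fun n => (fun T => G.neighborSet (pick T) ∩ T)^[n] A
  have hS_succ (n) : S (n + 1) = G.neighborSet (pick (S n)) ∩ S n :=
    Function.iterate_succ_apply' _ _ _
  have hS (n) : P (S n) := by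
    induction n with
    | zero => exact hA
    | succ n ih => rw [hS_succ]; exact hpick _ ih
  have hanti : Antitone S :=
    antitone_nat_of_succ_le fun n => hS_succ n ▸ inter_subset_right
  have hadj : Pairwise (G.Adj on fun n => pick (S n)) := by
    have : Std.Symm G.Adj := ⟨fun _ _ h => h.symm⟩
    refine (Std.Symm.pairwise_on _).2 fun n m hnm => ?_
    have hm : pick (S m) ∈ S (n + 1) := hanti hnm (hpick_mem _ (hS m))
    rw [hS_succ] at hm
    exact hm.1
  exact ⟨_, infinite_range_of_injective fun n m h => by_contra fun hnm => (hadj hnm).ne h,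
    hadj.range_pairwise⟩

theorem exists_subset_mk_neighborSet_inter_lt (hG : ∀ s, G.IsClique s → s.Finite) (A : Set α) :
    ∃ B ⊆ A, #B = #A ∧ ∀ x ∈ B, #(G.neighborSet x ∩ B : Set α) < #A := by
  by_contra! h
  obtain ⟨Y, hY, hYc⟩ := exists_isClique_infinite_of_forall_exists (G := G)
    (fun S => S ⊆ A ∧ #S = #A) ⟨subset_rfl, rfl⟩ fun S ⟨hSA, hS⟩ => by
      obtain ⟨x, hx, hdeg⟩ := h S hSA hS
      exact ⟨x, hx, inter_subset_right.trans hSA,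
        (hS ▸ mk_le_mk_of_subset inter_subset_right).antisymm hdeg⟩
  exact hY (hG Y hYc)

theorem exists_isIndepSet_subset_of_mk_neighborSet_inter_lt {B : Set α} (hB : (#B).IsRegular)
    (hdeg : ∀ x ∈ B, #(G.neighborSet x ∩ B : Set α) < #B) :
    ∃ X ⊆ B, #X = #B ∧ G.IsIndepSet X := by
  obtain ⟨X, ⟨hXB, hXind⟩, hXmax⟩ := zorn_subset {X | X ⊆ B ∧ G.IsIndepSet X}
    fun C hC hchain => ⟨⋃₀ C, ⟨sUnion_subset fun X hX => (hC hX).1,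
      (pairwise_sUnion hchain.directedOn).2 fun X hX => (hC hX).2⟩,
      fun _ => subset_sUnion_of_mem⟩
  refine ⟨X, hXB, (mk_le_mk_of_subset hXB).antisymm (not_lt.1 fun hX => ?_), hXind⟩
  have hcover : B ⊆ X ∪ ⋃ x ∈ X, G.neighborSet x ∩ B := by
    intro y hy
    by_contra! hyX
    simp only [mem_union, mem_iUnion₂, mem_inter_iff, mem_neighborSet, not_or, not_exists,
      not_and] at hyX
    refine hyX.1 (hXmax ⟨insert_subset hy hXB, hXind.insert fun x hx _ => ?_⟩
      (subset_insert y X) (mem_insert y X))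
    exact ⟨fun h => hyX.2 x hx h.symm hy, fun h => hyX.2 x hx h hy⟩
  have hnbr : #(⋃ x ∈ X, G.neighborSet x ∩ B) < #B :=
    (card_biUnion_lt_iff_forall_of_isRegular hB hX).2 fun x hx => hdeg x (hXB hx)
  exact (mk_le_mk_of_subset hcover |>.trans (mk_union_le _ _)).not_gt
    (add_lt_of_lt hB.aleph0_le hX hnbr)

theorem exists_isIndepSet_subset_of_isRegular (hG : ∀ s, G.IsClique s → s.Finite) {A : Set α}
    (hA : (#A).IsRegular) : ∃ X ⊆ A, #X = #A ∧ G.IsIndepSet X := by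
  obtain ⟨B, hBA, hB, hdeg⟩ := exists_subset_mk_neighborSet_inter_lt hG A
  obtain ⟨X, hXB, hX, hXind⟩ :=
    exists_isIndepSet_subset_of_mk_neighborSet_inter_lt (hB ▸ hA) (hB ▸ hdeg)
  exact ⟨X, hXB.trans hBA, hX.trans hB, hXind⟩

theorem isIndepSet_iUnion_sdiff_neighborSet {ι : Type*} [LinearOrder ι] {D : ι → Set α}
    (hD : ∀ i, G.IsIndepSet (D i)) :
    G.IsIndepSet (⋃ i, D i \ ⋃ j < i, ⋃ x ∈ D j, G.neighborSet x) := by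
  have hfar ⦃i j x y⦄ (hji : j < i) (hx : x ∈ D j)
      (hy : y ∈ D i \ ⋃ j < i, ⋃ x ∈ D j, G.neighborSet x) : ¬G.Adj x y :=
    fun hxy => hy.2 (mem_biUnion hji (mem_biUnion hx hxy))
  rintro x hx y hy hxy
  obtain ⟨i, hxi⟩ := mem_iUnion.1 hx
  obtain ⟨j, hyj⟩ := mem_iUnion.1 hy
  rcases lt_trichotomy i j with hij | rfl | hji
  · exact hfar hij hxi.1 hyj
  · exact hD i hxi.1 hyj.1 hxy
  · exact fun h => hfar hji hyj.1 hxi h.symm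

theorem exists_isIndepSet_subset_mk_biUnion_neighborSet_lt (hG : ∀ s, G.IsClique s → s.Finite)
    {A : Set α} (hdeg : ∀ x ∈ A, #(G.neighborSet x ∩ A : Set α) < #A) {m : Cardinal.{u}}
    (hm : m.IsRegular) (hcof : (#A).ord.cof < m) (hmA : m < #A) :
    ∃ D ⊆ A, #D = m ∧ G.IsIndepSet D ∧ #(⋃ x ∈ D, G.neighborSet x ∩ A) < #A := by
  obtain ⟨θ, hθA, hθ⟩ := exists_cofinal_family #A
  choose γ hγ using fun x : A => hθ _ (hdeg x x.2)
  obtain ⟨i, T, hTA, hmT, hTγ⟩ := infinite_pigeonhole_set γ m hmA.le hm.aleph0_le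
    (by rwa [mk_toType, card_ord, hm.cof_ord])
  obtain ⟨E, hET, hE⟩ := le_mk_iff_exists_subset.1 hmT
  obtain ⟨D, hDE, hD, hDind⟩ := exists_isIndepSet_subset_of_isRegular hG (hE ▸ hm)
  have hDi (x) (hx : x ∈ D) : #(G.neighborSet x ∩ A : Set α) ≤ θ i :=
    hTγ (hET (hDE hx)) ▸ hγ _
  refine ⟨D, hDE.trans (hET.trans hTA), hD.trans hE, hDind, ?_⟩
  calc #(⋃ x ∈ D, G.neighborSet x ∩ A) ≤ #D * ⨆ x : D, #(G.neighborSet x ∩ A : Set α) :=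
        mk_biUnion_le _ _
    _ ≤ m * θ i := mul_le_mul' (hD.trans hE).le (ciSup_le' fun x => hDi x x.2)
    _ < #A := mul_lt_of_lt (hm.aleph0_le.trans hmA.le) hmA (hθA i)

theorem exists_isIndepSet_mk_eq_of_isSingular (hG : ∀ s, G.IsClique s → s.Finite)
    (hα : (#α).IsSingular) : ∃ X : Set α, #X = #α ∧ G.IsIndepSet X := by
  obtain ⟨A, -, hA, hdeg⟩ := exists_subset_mk_neighborSet_inter_lt hG univ
  rw [mk_univ] at hA hdeg
  rw [← hA] at hα hdeg ⊢
  choose! D hDA hD hDind hDnbr using fun m (hm : m.IsRegular) (hcof : (#A).ord.cof < m)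
    (hmA : m < #A) => exists_isIndepSet_subset_mk_biUnion_neighborSet_lt hG hdeg hm hcof hmA
  obtain ⟨μ, hμ, hgμ, hμA⟩ :=
    hα.exists_isRegular_family (fun m => #(⋃ x ∈ D m, G.neighborSet x ∩ A))
      hDnbr
  set P : (#A).ord.cof.ord.ToType → Set α :=
    fun i => D (μ i) \ ⋃ j < i, ⋃ x ∈ D (μ j), G.neighborSet x
  have hP (i) : #(P i) = μ i := by
    obtain ⟨hreg, hcof, hμiA⟩ := hμ i
    have hsize : #(D (μ i)) = μ i := hD _ hreg hcof hμiA
    have hold : D (μ i) ∩ ⋃ j < i, ⋃ x ∈ D (μ j), G.neighborSet x ⊆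
        ⋃ j ∈ Iio i, ⋃ x ∈ D (μ j), G.neighborSet x ∩ A := by
      rintro y ⟨hyi, hy⟩
      simp only [mem_iUnion₂, mem_Iio] at hy ⊢
      obtain ⟨j, hji, x, hx, hxy⟩ := hy
      exact ⟨j, hji, x, hx, hxy, hDA _ hreg hcof hμiA hyi⟩
    have hold_lt : #(⋃ j ∈ Iio i, ⋃ x ∈ D (μ j), G.neighborSet x ∩ A) < μ i := by
      refine (card_biUnion_lt_iff_forall_of_isRegular hreg ?_).2 fun j hji => hgμ hji
      exact (by simpa using mk_Iio_lt i : #(Iio i) < (#A).ord.cof).trans hcof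
    rw [mk_sdiff_eq_of_mk_inter_lt (hreg.aleph0_le.trans_eq hsize.symm)
      ((mk_le_mk_of_subset hold).trans_lt (hold_lt.trans_eq hsize.symm)), hsize]
  refine ⟨⋃ i, P i, ?_,
    isIndepSet_iUnion_sdiff_neighborSet fun i => hDind _ (hμ i).1 (hμ i).2.1 (hμ i).2.2⟩
  refine ((mk_le_mk_of_subset (subset_univ _)).trans_eq (mk_univ.trans hA.symm)).antisymm
    (not_lt.1 fun hlt => ?_)
  obtain ⟨i, hi⟩ := hμA _ hlt
  exact hi.not_ge (hP i ▸ mk_le_mk_of_subset (subset_iUnion P i))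

theorem exists_isIndepSet_mk_eq_or_exists_isClique_infinite (G : SimpleGraph α) (hα : ℵ₀ ≤ #α) :
    (∃ X : Set α, #X = #α ∧ G.IsIndepSet X) ∨ ∃ Y : Set α, Y.Infinite ∧ G.IsClique Y := by
  refine or_iff_not_imp_right.2 fun h => ?_
  have hG : ∀ s, G.IsClique s → s.Finite := fun s hs => not_not.1 fun hinf => h ⟨s, hinf, hs⟩
  rcases isRegular_or_isSingular hα with hreg | hsing
  · obtain ⟨X, -, hX, hXind⟩ := exists_isIndepSet_subset_of_isRegular hG (A := univ)
      (mk_univ (α := α) ▸ hreg)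
    exact ⟨X, hX.trans mk_univ, hXind⟩
  · exact exists_isIndepSet_mk_eq_of_isSingular hG hsing

end SimpleGraph

/-- **Dushnik–Miller**: `κ → (κ, ω)²` for every infinite cardinal `κ`. -/
theorem dushnik_miller {α : Type u} (κ : Cardinal.{u}) (hκ : ℵ₀ ≤ κ) (hα : #α = κ)
    (c : α → α → Fin 2) (hsymm : ∀ x y, c x y = c y x) :
    (∃ X : Set α, #X = κ ∧ ∀ x ∈ X, ∀ y ∈ X, x ≠ y → c x y = 0) ∨
    (∃ Y : Set α, Y.Infinite ∧ ∀ x ∈ Y, ∀ y ∈ Y, x ≠ y → c x y = 1) := by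
  subst hα
  let G := SimpleGraph.fromRel fun x y : α => c x y = 1
  have hG (x y : α) : G.Adj x y ↔ x ≠ y ∧ c x y = 1 := by
    simp [G, hsymm y x]
  refine (G.exists_isIndepSet_mk_eq_or_exists_isClique_infinite hκ).imp
    (fun ⟨X, hX, hXind⟩ => ⟨X, hX, fun x hx y hy hxy => ?_⟩)
    fun ⟨Y, hY, hYcl⟩ => ⟨Y, hY, fun x hx y hy hxy => ((hG x y).1 (hYcl hx hy hxy)).2⟩
  have : c x y ≠ 1 := fun h => hXind hx hy hxy ((hG x y).2 ⟨hxy, h⟩)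
  omega
end

section
/- ω₁ → (ω₁, ω+1)²: for every coloring c : [ω₁]² → 2, either there is an uncountable 0-homogeneous set, or there is a 1-homogeneous set of order type ω+1. -/
/-!
For each `z` fix a maximal `r`-clique `F z` among the `r`-neighbours of `z` below `z`. If some
`F z` is infinite, an increasing `ω`-sequence in it together with `z` is an `r`-clique of type
`ω + 1`. Otherwise every `F z` is a finite subset of `[0, z)`, so a pressing-down argument and
counting finite subsets of a countable initial segment give `γ` and an uncountable set of
`z > γ` sharing one `F z ⊆ [0, γ]`. Two such points `y < z` are not `r`-related: otherwise
`y` could be added to `F z`, contradicting maximality.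
-/

open Cardinal

/-- The order type of a subset of a well-ordered type. -/
noncomputable def setOType {T : Type u} [LinearOrder T] [WellFoundedLT T] (Y : Set T) :
    Ordinal.{u} :=
  Ordinal.type ((· < ·) : Y → Y → Prop)

open Set

theorem not_countable_diff {α : Type*} {S C : Set α} (hS : ¬ S.Countable) (hC : C.Countable) :
    ¬ (S \ C).Countable := fun h =>
  hS ((h.union hC).mono fun x hx => (em (x ∈ C)).elim Or.inr fun hxC => Or.inl ⟨hx, hxC⟩)

theorem exists_not_countable_inter_preimage_singleton {α β : Type*} {S : Set α} {T : Set β}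
    {f : α → β} (hS : ¬ S.Countable) (hT : T.Countable) (hf : MapsTo f S T) :
    ∃ t, ¬ (S ∩ f ⁻¹' {t}).Countable := by
  by_contra! h
  refine hS ((hT.biUnion fun t _ => h t).mono fun x hx => ?_)
  exact mem_biUnion (hf hx) ⟨hx, rfl⟩

theorem exists_maximal_pairwise_subset {α : Type*} (r : α → α → Prop) (s : Set α) :
    ∃ t, Maximal (fun t => t ⊆ s ∧ t.Pairwise r) t :=
  zorn_subset {t | t ⊆ s ∧ t.Pairwise r} fun C hCs hC => ⟨⋃₀ C,
    show _ ∧ _ from ⟨sUnion_subset fun _ ht => (hCs ht).1,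
      (pairwise_sUnion hC.directedOn).2 fun _ ht => (hCs ht).2⟩,
    fun _ => subset_sUnion_of_mem⟩

section WellOrder

variable {α : Type*} [LinearOrder α] [WellFoundedLT α]

theorem Set.Infinite.exists_strictMono_seq {S : Set α} (hS : S.Infinite) :
    ∃ u : ℕ → α, StrictMono u ∧ ∀ n, u n ∈ S := by
  have := hS.to_subtype
  obtain ⟨f, hf | hf⟩ := Infinite.exists_strictMono_or_strictAnti S
  · exact ⟨fun n => f n, (Subtype.strictMono_coe _).comp hf, fun n => (f n).2⟩
  · exact (not_strictAnti_of_wellFoundedLT f hf).elim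

theorem setOType_insert_range_eq_omega0_add_one {v : ℕ → α} (hv : StrictMono v) {z : α}
    (hz : ∀ n, v n < z) : setOType (insert z (range v)) = Ordinal.omega0 + 1 := by
  let f : ℕ ⊕ₗ Unit → (insert z (range v) : Set α) := fun x => match ofLex x with
    | .inl n => ⟨v n, mem_insert_of_mem _ (mem_range_self n)⟩
    | .inr _ => ⟨z, mem_insert z _⟩
  have hf : StrictMono f := by
    rintro (m | _) (n | _) h
    · exact hv (Sum.lex_inl_inl.mp h)
    · exact hz m
    · exact absurd h Sum.lex_inr_inl
    · exact absurd h (lt_irrefl _)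
  have hsurj : Function.Surjective f := by
    rintro ⟨y, rfl | ⟨n, rfl⟩⟩
    · exact ⟨toLex (.inr ()), rfl⟩
    · exact ⟨toLex (.inl n), rfl⟩
  have : IsWellOrder (ℕ ⊕ₗ Unit) (· < ·) :=
    inferInstanceAs (IsWellOrder (ℕ ⊕ Unit) (Sum.Lex (· < ·) (· < ·)))
  have hlex :
      Ordinal.type ((· < ·) : ℕ ⊕ₗ Unit → ℕ ⊕ₗ Unit → Prop) = Ordinal.omega0 + 1 := by
    change Ordinal.type (Sum.Lex (α := ℕ) (β := Unit) (· < ·) (· < ·)) = _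
    rw [Ordinal.type_sum_lex, Ordinal.type_nat_lt, Ordinal.type_eq_one_of_unique]
  have htype := (hf.orderIsoOfSurjective f hsurj).toRelIsoLT.ordinal_lift_type_eq
  rwa [hlex, Ordinal.lift_add, Ordinal.lift_omega0, Ordinal.lift_one, Ordinal.lift_uzero,
    eq_comm] at htype

theorem Set.Infinite.exists_subset_insert_setOType_eq {G : Set α} (hG : G.Infinite) {z : α}
    (hGz : G ⊆ Iio z) : ∃ Y ⊆ insert z G, setOType Y = Ordinal.omega0 + 1 := by
  obtain ⟨v, hv, hvG⟩ := hG.exists_strictMono_seq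
  exact ⟨insert z (range v), insert_subset_insert (range_subset_iff.2 hvG),
    setOType_insert_range_eq_omega0_add_one hv fun n => hGz (hvG n)⟩

end WellOrder

section MaximalLowerClique

variable {α : Type*} [LinearOrder α] (r : α → α → Prop)

def lowerNeighbors (z : α) : Set α := {y | y < z ∧ r y z}

def IsMaximalLowerClique (F : α → Set α) : Prop :=
  ∀ z, Maximal (fun t => t ⊆ lowerNeighbors r z ∧ t.Pairwise r) (F z)

theorem exists_isMaximalLowerClique : ∃ F, IsMaximalLowerClique r F :=
  ⟨_, fun z => (exists_maximal_pairwise_subset r (lowerNeighbors r z)).choose_spec⟩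

variable {r} {F : α → Set α}

theorem IsMaximalLowerClique.subset_Iio (hF : IsMaximalLowerClique r F) (z : α) :
    F z ⊆ Iio z :=
  fun _ hy => ((hF z).prop.1 hy).1

variable [Std.Symm r]

theorem IsMaximalLowerClique.pairwise_insert (hF : IsMaximalLowerClique r F) (z : α) :
    (insert z (F z)).Pairwise r :=
  pairwise_insert_of_symm.2 ⟨(hF z).prop.2, fun _ hy _ => symm ((hF z).prop.1 hy).2⟩

theorem IsMaximalLowerClique.finite [WellFoundedLT α] (hF : IsMaximalLowerClique r F)
    (hY : ¬ ∃ Y : Set α, setOType Y = Ordinal.omega0 + 1 ∧ Y.Pairwise r) (z : α) :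
    (F z).Finite := by
  by_contra hinf
  obtain ⟨Y, hYsub, hYtype⟩ := Set.Infinite.exists_subset_insert_setOType_eq hinf
    (hF.subset_Iio z)
  exact hY ⟨Y, hYtype, (hF.pairwise_insert z).mono hYsub⟩

theorem IsMaximalLowerClique.not_rel (hF : IsMaximalLowerClique r F) {y z : α} (hyz : y < z)
    (hFyz : F y = F z) (hFy : F z ⊆ Iio y) : ¬ r y z := by
  intro hr
  have hy : y ∉ F z := fun h => lt_irrefl y (hFy h)
  refine hy ((hF z).mem_of_prop_insert ⟨insert_subset ⟨hyz, hr⟩ (hF z).prop.1, ?_⟩)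
  exact pairwise_insert_of_symm.2
    ⟨(hF z).prop.2, fun b hb _ => symm ((hF y).prop.1 (hFyz ▸ hb)).2⟩

theorem IsMaximalLowerClique.pairwise_not_rel (hF : IsMaximalLowerClique r F) {S t : Set α}
    (hSt : ∀ z ∈ S, F z = t) (htS : ∀ z ∈ S, t ⊆ Iio z) :
    S.Pairwise fun x y => ¬ r x y := by
  intro x hx y hy hxy
  rcases hxy.lt_or_gt with h | h
  · exact hF.not_rel h ((hSt x hx).trans (hSt y hy).symm) ((hSt y hy) ▸ htS x hx)
  · exact fun hr =>
      hF.not_rel h ((hSt y hy).trans (hSt x hx).symm) ((hSt x hx) ▸ htS y hy) (symm hr)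

end MaximalLowerClique

local notation "ω₁" => Ordinal.ToType (Cardinal.ord (Cardinal.aleph 1))

theorem countable_Iio_omega1 (z : ω₁) : (Iio z).Countable := by
  rw [← le_aleph0_iff_set_countable, ← lt_aleph_one_iff]
  simpa using mk_Iio_lt z

theorem countable_Iic_omega1 (z : ω₁) : (Iic z).Countable :=
  Iio_insert (a := z) ▸ (countable_Iio_omega1 z).insert z

theorem not_countable_univ_omega1 : ¬ (univ : Set ω₁).Countable := by
  rw [← le_aleph0_iff_set_countable, mk_univ, mk_toType, card_ord]
  exact aleph0_lt_aleph_one.not_ge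

theorem Set.Countable.exists_gt_omega1 {S : Set ω₁} (hS : S.Countable) :
    ∃ z, ∀ s ∈ S, s < z := by
  by_contra! h
  refine not_countable_univ_omega1 ((hS.biUnion fun s _ => countable_Iic_omega1 s).mono ?_)
  intro z _
  obtain ⟨s, hs, hzs⟩ := h z
  exact mem_biUnion hs hzs

theorem exists_not_countable_setOf_subset_Iic {F : ω₁ → Set ω₁} (hfin : ∀ z, (F z).Finite)
    (hlt : ∀ z, F z ⊆ Iio z) : ∃ γ, ¬ {z | F z ⊆ Iic γ}.Countable := by
  by_contra! h
  choose next hnext using fun γ => ((h γ).insert γ).exists_gt_omega1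
  obtain ⟨x₀⟩ : Nonempty ω₁ := Ordinal.nonempty_toType_iff.2 (ord_pos.2 (aleph_pos 1)).ne'
  let d : ℕ → ω₁ := fun n => next^[n] x₀
  have hd_succ : ∀ n, d (n + 1) = next (d n) := fun n => Function.iterate_succ_apply' next n x₀
  have hd : Monotone d := monotone_nat_of_le_succ fun n =>
    (hd_succ n ▸ hnext (d n) (d n) (mem_insert _ _)).le
  obtain ⟨ub, hub⟩ := (countable_range d).exists_gt_omega1
  obtain ⟨δ, hδ, hδmin⟩ := wellFounded_lt.has_min {z | ∀ n, d n ≤ z}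
    ⟨ub, fun n => (hub _ (mem_range_self n)).le⟩
  -- `δ = sup d n`, so the finite `F δ ⊆ [0, δ)` lies in some `[0, d N]`, forcing `δ < d (N + 1)`.
  have hcofinal : ∀ x ∈ F δ, ∀ᶠ n in Filter.atTop, x ≤ d n := by
    intro x hx
    obtain ⟨n, hn⟩ : ∃ n, x < d n := by
      by_contra! hx'
      exact hδmin x hx' (hlt δ hx)
    exact Filter.eventually_atTop.2 ⟨n, fun m hm => hn.le.trans (hd hm)⟩
  obtain ⟨N, hN⟩ := ((hfin δ).eventually_all.2 hcofinal).exists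
  exact (hδ (N + 1)).not_gt (hd_succ N ▸ hnext (d N) δ (mem_insert_of_mem _ hN))

theorem exists_not_countable_pairwise_not_or_setOType_eq (r : ω₁ → ω₁ → Prop)
    [Std.Symm r] :
    (∃ X : Set ω₁, ¬ X.Countable ∧ X.Pairwise fun x y => ¬ r x y) ∨
      ∃ Y : Set ω₁, setOType Y = Ordinal.omega0 + 1 ∧ Y.Pairwise r := by
  refine or_iff_not_imp_right.2 fun hY => ?_
  obtain ⟨F, hF⟩ := exists_isMaximalLowerClique r
  have hfin := hF.finite hY
  obtain ⟨γ, hγ⟩ := exists_not_countable_setOf_subset_Iic hfin hF.subset_Iio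
  obtain ⟨t, ht⟩ := exists_not_countable_inter_preimage_singleton hγ
    (countable_ofPred_finite_subset (countable_Iic_omega1 γ)) fun z hz => ⟨hfin z, hz⟩
  refine ⟨_, not_countable_diff ht (countable_Iic_omega1 γ),
    hF.pairwise_not_rel (t := t) (fun z hz => hz.1.2) ?_⟩
  rintro z ⟨⟨hzγ, rfl⟩, hz⟩ x hx
  exact (hzγ hx).trans_lt (not_le.1 (mem_Iic.not.1 hz))

/-- **Erdős–Rado**: `ω₁ → (ω₁, ω+1)²`: every symmetric 2-coloring of pairs from `ω₁` has an
uncountable 0-homogeneous set or a 1-homogeneous set of order type `ω + 1`. -/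
theorem omega1_to_omega1_omega_add_one
    (c : (Cardinal.aleph 1).ord.ToType → (Cardinal.aleph 1).ord.ToType → Fin 2)
    (hsymm : ∀ x y, c x y = c y x) :
    (∃ X : Set (Cardinal.aleph 1).ord.ToType, ¬ X.Countable ∧
        ∀ x ∈ X, ∀ y ∈ X, x ≠ y → c x y = 0) ∨
    (∃ Y : Set (Cardinal.aleph 1).ord.ToType, setOType Y = Ordinal.omega0 + 1 ∧
        ∀ x ∈ Y, ∀ y ∈ Y, x ≠ y → c x y = 1) := by
  have : Std.Symm fun x y => c x y = 1 := ⟨fun x y h => (hsymm y x).trans h⟩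
  refine (exists_not_countable_pairwise_not_or_setOType_eq fun x y => c x y = 1).imp ?_ id
  rintro ⟨X, hX, hX0⟩
  exact ⟨X, hX, fun x hx y hy hxy => by have := hX0 hx hy hxy; omega⟩
end

section
/- If the relation ω₂ → (ω₂, ω₁)² holds, then CH holds (2^ω = ω₁). -/
/-! If `2 ^ ℵ₀ ≥ ℵ₂`, fix an injection `g` of `ω₂` into `ℝ` and colour a pair `0` when `g`
preserves its order and `1` when `g` reverses it (Sierpiński). On a homogeneous set `g` is then
strictly monotone or strictly antitone, and a well-ordered set embeds order-preservingly or
order-reversingly into `ℝ` only if it is countable. So there is neither a `0`-homogeneous set of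
size `ℵ₂` nor a `1`-homogeneous set of order type `ω₁`. -/

open Cardinal

theorem card_setOType {T : Type u} [LinearOrder T] [WellFoundedLT T] (Y : Set T) :
    (setOType Y).card = #Y :=
  Ordinal.card_type _

section WellOrderedCountable

variable {α β : Type*} [TopologicalSpace α] [LinearOrder α] [OrderTopology α]
  [SecondCountableTopology α] [LinearOrder β] [WellFoundedLT β] {f : β → α} {s : Set β}

/-- Every point of `s` except its maximum has a successor `m` in `s`, and then no value of `f` on
`s` lies in the gap `(f x, f m)`; a second countable order has only countably many such gaps. -/
theorem StrictMonoOn.countable_of_wellFoundedLT (hf : StrictMonoOn f s) : s.Countable := by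
  have hcover : s ⊆ {x ∈ s | ∃ z, f x < z ∧ ∀ y ∈ s, x < y → z ≤ f y} ∪
      {x ∈ s | ∀ y ∈ s, ¬ x < y} := by
    intro x hx
    by_cases hmax : ∀ y ∈ s, ¬ x < y
    · exact Or.inr ⟨hx, hmax⟩
    push Not at hmax
    obtain ⟨m, ⟨hms, hxm⟩, hmin⟩ := wellFounded_lt.has_min {y | y ∈ s ∧ x < y} hmax
    exact Or.inl ⟨hx, f m, hf hx hms hxm,
      fun y hy hxy => hf.monotoneOn hms hy (not_lt.1 (hmin y ⟨hy, hxy⟩))⟩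
  refine ((countable_image_lt_image_Ioi_within s f).union (Set.Subsingleton.countable ?_)).mono
    hcover
  rintro x ⟨hx, hxmax⟩ y ⟨hy, hymax⟩
  exact le_antisymm (not_lt.1 (hymax x hx)) (not_lt.1 (hxmax y hy))

theorem StrictAntiOn.countable_of_wellFoundedLT (hf : StrictAntiOn f s) : s.Countable :=
  hf.dual_right.countable_of_wellFoundedLT

end WellOrderedCountable

section SierpinskiColoring

variable {W L : Type*} [LinearOrder W] [LinearOrder L] {g : W → L}

def sierpinskiColoring (g : W → L) (x y : W) : Fin 2 :=
  if (x < y ↔ g x < g y) then 0 else 1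

theorem sierpinskiColoring_comm (hg : Function.Injective g) (x y : W) :
    sierpinskiColoring g x y = sierpinskiColoring g y x := by
  obtain rfl | hne := eq_or_ne x y
  · rfl
  rcases hne.lt_or_gt with hxy | hxy <;> rcases (hg.ne hne).lt_or_gt with h | h <;>
    simp [sierpinskiColoring, hxy, h, hxy.not_gt, h.not_gt]

theorem strictMonoOn_of_sierpinskiColoring_eq_zero {s : Set W}
    (h : ∀ x ∈ s, ∀ y ∈ s, x ≠ y → sierpinskiColoring g x y = 0) : StrictMonoOn g s := by
  intro x hx y hy hxy
  have hcolor := h x hx y hy hxy.ne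
  by_cases hpreserved : x < y ↔ g x < g y
  · exact hpreserved.1 hxy
  · simp [sierpinskiColoring, hpreserved] at hcolor

theorem strictAntiOn_of_sierpinskiColoring_eq_one (hg : Function.Injective g) {s : Set W}
    (h : ∀ x ∈ s, ∀ y ∈ s, x ≠ y → sierpinskiColoring g x y = 1) : StrictAntiOn g s := by
  intro x hx y hy hxy
  have hcolor := h x hx y hy hxy.ne
  by_cases hpreserved : x < y ↔ g x < g y
  · simp [sierpinskiColoring, hpreserved] at hcolor
  · exact lt_of_le_of_ne (not_lt.1 fun hg' => hpreserved (iff_of_true hxy hg'))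
      (hg.ne hxy.ne).symm

end SierpinskiColoring

theorem Cardinal.aleph_two_le_continuum_of_ne (h : continuum.{u} ≠ ℵ_ 1) :
    ℵ_ 2 ≤ continuum.{u} := by
  rw [← one_add_one_eq_two, ← succ_aleph]
  exact Order.succ_le_of_lt (aleph_one_le_continuum.lt_of_ne' h)

theorem exists_injective_toType_aleph_two_real (h : continuum.{0} ≠ ℵ_ 1) :
    ∃ g : (aleph.{u} 2).ord.ToType → ℝ, Function.Injective g := by
  obtain ⟨e⟩ : Nonempty ((aleph.{u} 2).ord.ToType ↪ ℝ) := by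
    rw [← lift_mk_le', mk_toType, card_ord, mk_real]
    simpa using lift_le.{u}.2 (aleph_two_le_continuum_of_ne h)
  exact ⟨e, e.injective⟩

/-- If `ω₂ → (ω₂, ω₁)²` holds, then CH holds. -/
theorem partition_omega2_implies_CH
    (hpart : ∀ c : (Cardinal.aleph 2).ord.ToType → (Cardinal.aleph 2).ord.ToType → Fin 2,
      (∀ x y, c x y = c y x) →
      ((∃ X : Set (Cardinal.aleph 2).ord.ToType, #X = Cardinal.aleph 2 ∧
          ∀ x ∈ X, ∀ y ∈ X, x ≠ y → c x y = 0) ∨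
       (∃ Y : Set (Cardinal.aleph 2).ord.ToType, setOType Y = (Cardinal.aleph 1).ord ∧
          ∀ x ∈ Y, ∀ y ∈ Y, x ≠ y → c x y = 1))) :
    (2 : Cardinal.{0}) ^ ℵ₀ = Cardinal.aleph 1 := by
  rw [two_power_aleph0]
  by_contra hCH
  obtain ⟨g, hg⟩ := exists_injective_toType_aleph_two_real hCH
  rcases hpart (sierpinskiColoring g) (sierpinskiColoring_comm hg) with
    ⟨X, hXcard, hX⟩ | ⟨Y, hYtype, hY⟩
  · have hcount := (strictMonoOn_of_sierpinskiColoring_eq_zero hX).countable_of_wellFoundedLT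
    exact (aleph0_lt_aleph_one.trans (aleph_lt_aleph.2 one_lt_two)).not_ge
      (hXcard ▸ hcount.le_aleph0)
  · have hcount := (strictAntiOn_of_sierpinskiColoring_eq_one hg hY).countable_of_wellFoundedLT
    have hYcard : #Y = ℵ_ 1 := by rw [← card_setOType, hYtype, card_ord]
    exact aleph0_lt_aleph_one.not_ge (hYcard ▸ hcount.le_aleph0)
end

section
/- Assuming CH and 2^{ω₁} = ω₂, the relation ω₂ ↛ (ω₂, ω₁+2)² holds: there is a coloring c : [ω₂]² → 2 admitting no 0-homogeneous set of size ω₂ and no 1-homogeneous set of order type ω₁ + 2. -/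
/-!
Fix an injection `code : ω₂ → 2^ω₁`, a listing `enum` of the subsets of `ω₂` of size `≤ ℵ₁`,
and for each `y` an injection `index y` of its predecessors into `ω₁`.
For every `ζ < y` at most one point `x < y` is joined to `y`: a point of `enum ζ` whose code lies
lexicographically above `code y` and agrees with it up to `index y ζ`, if there is one.

If `s < s'` are the last two points of a 1-homogeneous set of type `ω₁ + 2`, the `ℵ₁` points
below `s` are joined to `s'` through distinct indices, and all these indices lie below the first
difference of `code s'` and `code s`, a countable ordinal.

If `X` is 0-homogeneous, pick `t₀` such that `X ∩ [0, t₀)` realizes every restriction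
`code x ↾ [0, δ]` with `x ∈ X`, and let `ζ` list `X ∩ [0, t₀)`. A point `y ∈ X` above `t₀` and
`ζ` has no candidate for `ζ`, since it would be joined to a point of `X`; this forces the points of
`X` with the same `code y ↾ [0, index y ζ]` to have lexicographically increasing codes. Under CH a well-ordered increasing family in the
lexicographic order of `2^ω₁` has size `≤ ℵ₁`, hence so has `X`.
-/

open Cardinal

open Set

universe u v

section Lex

variable {ι : Type*} [Preorder ι] {β : Type*} [Preorder β] {a b c : ι → β} {i : ι}

theorem toLex_lt_of_eqOn_Iic_left (hab : ∀ j < i, a j = b j) (hi : a i < b i)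
    (hc : EqOn c a (Iic i)) : toLex c < toLex b :=
  ⟨i, fun j hj => (hc hj.le).trans (hab j hj), (hc le_rfl).trans_lt hi⟩

theorem toLex_lt_of_eqOn_Iic_right (hab : ∀ j < i, a j = b j) (hi : a i < b i)
    (hc : EqOn c b (Iic i)) : toLex a < toLex c :=
  ⟨i, fun j hj => (hab j hj).trans (hc hj.le).symm, hi.trans_le (hc le_rfl).ge⟩

end Lex

section RestrictIic

variable {ι : Type u} [Preorder ι] {β : Type v}

def restrictIic (a : ι → β) (i : ι) : Σ k : ι, Iic k → β :=
  ⟨i, (Iic i).domRestrict a⟩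

theorem eqOn_of_restrictIic_eq {a b : ι → β} {i i' : ι}
    (h : restrictIic a i = restrictIic b i') : i = i' ∧ EqOn a b (Iic i) := by
  obtain ⟨rfl, h⟩ := Sigma.mk.inj_iff.1 h
  exact ⟨rfl, fun j hj => congrFun (eq_of_heq h) ⟨j, hj⟩⟩

theorem exists_subset_forall_restrictIic_eq {α : Type (max u v)} (F : α → ι → β) (X : Set α) :
    ∃ R ⊆ X, #R ≤ #(Σ k : ι, Iic k → β) ∧
      ∀ x ∈ X, ∀ i, ∃ x' ∈ R, restrictIic (F x') i = restrictIic (F x) i := by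
  let rep (v : {v : Σ k : ι, Iic k → β // ∃ x ∈ X, restrictIic (F x) v.1 = v}) : α :=
    v.2.choose
  have hrep v : rep v ∈ X ∧ restrictIic (F (rep v)) v.1.1 = v.1 := v.2.choose_spec
  refine ⟨range rep, ?_, mk_range_le.trans (mk_subtype_le _), fun x hx i => ?_⟩
  · rintro _ ⟨v, rfl⟩
    exact (hrep v).1
  · exact ⟨_, mem_range_self _, (hrep ⟨restrictIic (F x) i, x, hx, rfl⟩).2⟩

end RestrictIic

theorem mk_le_mk_sigma_add_one_of_strictMono {α ι : Type u} [LinearOrder α] [WellFoundedLT α]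
    [LinearOrder ι] [WellFoundedLT ι] {F : α → ι → Bool} (hF : StrictMono (toLex ∘ F)) :
    #α ≤ #(Σ k : ι, Iic k → Bool) + 1 := by
  let := SuccOrder.ofLinearWellFoundedLT α
  have hsucc (x : {x : α // ¬IsMax x}) : toLex (F x) < toLex (F (Order.succ x.1)) :=
    hF (Order.lt_succ_of_not_isMax x.2)
  choose δ hδ using hsucc
  -- A later `x'` with the same restriction would have `F x' < F (succ x) ≤ F x'`.
  have hinj : Function.Injective fun x : {x : α // ¬IsMax x} => restrictIic (F x) (δ x) := by
    refine Function.Injective.of_lt_imp_ne fun x x' hxx' h => ?_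
    obtain ⟨-, hFF⟩ := eqOn_of_restrictIic_eq h
    have h1 : toLex (F x') < toLex (F (Order.succ x.1)) :=
      toLex_lt_of_eqOn_Iic_left (hδ x).1 (hδ x).2 hFF.symm
    exact h1.not_ge (hF.monotone (Order.succ_le_of_lt hxx'))
  have hmax : #{x : α | IsMax x} ≤ 1 :=
    mk_le_one_iff_set_subsingleton.2 fun x hx y hy =>
      (le_total x y).elim (fun h => le_antisymm h (hx h)) (fun h => le_antisymm (hy h) h)
  calc #α = #{x : α | ¬IsMax x} + #{x : α | IsMax x} := by
        rw [← mk_sum_compl {x : α | ¬IsMax x}, compl_ofPred]; simp only [not_not]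
    _ ≤ #(Σ k : ι, Iic k → Bool) + 1 := add_le_add (mk_le_of_injective hinj) hmax

theorem exists_forall_lt_of_mk_lt_cof {α : Type*} [LinearOrder α] {s : Set α}
    (hs : #s < Order.cof α) : ∃ t, ∀ x ∈ s, x < t := by
  by_contra! h
  exact (Order.cof_le h).not_gt hs

theorem exists_lt_mk_Iio_eq_of_type_eq_add_two {α : Type u} [LinearOrder α] [WellFoundedLT α]
    {o : Ordinal.{u}} (h : Ordinal.type (α := α) (· < ·) = o + 2) :
    ∃ a b : α, a < b ∧ #(Iio a) = o.card := by
  have ho : o < Ordinal.type (α := α) (· < ·) := h ▸ lt_add_of_pos_right o two_pos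
  have ho1 : o + 1 < Ordinal.type (α := α) (· < ·) := h ▸ (add_lt_add_iff_left o).2 one_lt_two
  refine ⟨Ordinal.enum (· < ·) ⟨o, ho⟩, Ordinal.enum (· < ·) ⟨o + 1, ho1⟩,
    Ordinal.enum_lt_enum.2 (lt_add_one o), ?_⟩
  have := Ordinal.card_typein (r := ((· < ·) : α → α → Prop)) (Ordinal.enum (· < ·) ⟨o, ho⟩)
  rw [Ordinal.typein_enum] at this
  exact this.symm

theorem lt_aleph_two_iff {c : Cardinal} : c < ℵ_ 2 ↔ c ≤ ℵ₁ := by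
  rw [← one_add_one_eq_two, ← succ_aleph, Order.lt_succ_iff]

abbrev Omega1 : Type u := (ℵ₁ : Cardinal.{u}).ord.ToType

abbrev Omega2 : Type u := (ℵ_ 2 : Cardinal.{u}).ord.ToType

theorem mk_omega1 : #Omega1.{u} = ℵ₁ := by simp

theorem mk_omega2 : #Omega2.{u} = ℵ_ 2 := by simp

theorem mk_Iio_omega1_le (i : Omega1) : #(Iio i) ≤ ℵ₀ :=
  lt_aleph_one_iff.1 (by simpa using mk_Iio_lt i)

theorem mk_Iic_omega1_le (i : Omega1) : #(Iic i) ≤ ℵ₀ := by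
  rw [← Iio_insert, le_aleph0_iff_set_countable]
  exact (le_aleph0_iff_set_countable.1 (mk_Iio_omega1_le i)).insert i

theorem mk_sigma_Iic_bool_le (hCH : (2 : Cardinal.{u}) ^ ℵ₀ = ℵ₁) :
    #(Σ i : Omega1.{u}, Iic i → Bool) ≤ ℵ₁ := by
  have (i : Omega1.{u}) : #(Iic i → Bool) ≤ ℵ₁ := by
    rw [mk_arrow, mk_bool, lift_two, lift_uzero]
    exact (power_le_power_left two_ne_zero (mk_Iic_omega1_le i)).trans_eq hCH
  calc #(Σ i : Omega1.{u}, Iic i → Bool) ≤ #Omega1.{u} * ℵ₁ := by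
        rw [mk_sigma, ← sum_const']; exact sum_le_sum _ _ this
    _ = ℵ₁ := by rw [mk_omega1, mul_eq_self (aleph0_le_aleph 1)]

theorem mk_Iio_omega2_le (y : Omega2) : #(Iio y) ≤ ℵ₁ :=
  lt_aleph_two_iff.1 (by simpa using mk_Iio_lt y)

theorem mk_Iic_omega2_le (y : Omega2) : #(Iic y) ≤ ℵ₁ := by
  rw [← Iio_insert]
  exact mk_insert_le.trans <| add_le_of_le (aleph0_le_aleph 1) (mk_Iio_omega2_le y)
    (one_le_aleph0.trans (aleph0_le_aleph 1))

theorem exists_forall_lt_of_mk_le_aleph_one {s : Set Omega2.{u}} (hs : #s ≤ ℵ₁) :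
    ∃ t, ∀ x ∈ s, x < t := by
  refine exists_forall_lt_of_mk_lt_cof ?_
  rw [Ordinal.cof_toType, ← one_add_one_eq_two, (isRegular_aleph_add_one 1).cof_ord,
    one_add_one_eq_two]
  exact lt_aleph_two_iff.2 hs

theorem mk_bounded_set_omega2_le (hCH1 : (2 : Cardinal.{u}) ^ ℵ₁ = ℵ_ 2) :
    #{B : Set Omega2.{u} // #B ≤ ℵ₁} ≤ #Omega2.{u} := by
  refine (mk_bounded_set_le _ _).trans_eq ?_
  rw [mk_omega2, max_eq_left (aleph0_le_aleph 2), ← hCH1, ← power_mul,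
    mul_eq_self (aleph0_le_aleph 1)]

structure ColoringData : Type u where
  code : Omega2.{u} → Omega1.{u} → Bool
  code_injective : Function.Injective code
  enum : Omega2.{u} → Set Omega2.{u}
  exists_enum_eq : ∀ B : Set Omega2.{u}, #B ≤ ℵ₁ → ∃ ζ, enum ζ = B
  index : ∀ y : Omega2.{u}, Iio y ↪ Omega1.{u}

namespace ColoringData

theorem nonempty (hCH1 : (2 : Cardinal.{u}) ^ ℵ₁ = ℵ_ 2) : Nonempty ColoringData.{u} := by
  obtain ⟨code⟩ : Nonempty (Omega2.{u} ↪ (Omega1.{u} → Bool)) := by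
    rw [← le_def, mk_arrow, mk_bool, lift_two, lift_uzero, mk_omega1, hCH1, mk_omega2]
  obtain ⟨j⟩ := (le_def _ _).1 (mk_bounded_set_omega2_le hCH1)
  have : Nonempty {B : Set Omega2.{u} // #B ≤ ℵ₁} := ⟨⟨∅, by simp⟩⟩
  refine ⟨⟨code, code.injective, fun ζ => (Function.invFun j ζ).1, fun B hB => ⟨j ⟨B, hB⟩, ?_⟩,
    fun y => ((le_def _ _).1 (mk_omega1 ▸ mk_Iio_omega2_le y)).some⟩⟩
  rw [Function.leftInverse_invFun j.injective]

variable (D : ColoringData.{u})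

def candidates (y : Omega2.{u}) (ζ : Iio y) : Set Omega2.{u} :=
  {x | x < y ∧ x ∈ D.enum ζ ∧ toLex (D.code y) < toLex (D.code x) ∧
    EqOn (D.code y) (D.code x) (Iic (D.index y ζ))}

def lowerNeighbors (y : Omega2.{u}) : Set Omega2.{u} :=
  range fun ζ : {ζ : Iio y // (D.candidates y ζ).Nonempty} => ζ.2.some

open Classical in
noncomputable def color (x y : Omega2.{u}) : Fin 2 :=
  if x ∈ D.lowerNeighbors y ∨ y ∈ D.lowerNeighbors x then 1 else 0

variable {D}

theorem color_comm (x y : Omega2.{u}) : D.color x y = D.color y x := by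
  classical
  exact if_congr or_comm rfl rfl

theorem exists_mem_candidates_of_mem_lowerNeighbors {x y : Omega2.{u}}
    (h : x ∈ D.lowerNeighbors y) : ∃ ζ, x ∈ D.candidates y ζ := by
  obtain ⟨ζ, rfl⟩ := h
  exact ⟨ζ, ζ.2.some_mem⟩

theorem lt_of_mem_lowerNeighbors {x y : Omega2.{u}} (h : x ∈ D.lowerNeighbors y) : x < y :=
  let ⟨_, hx⟩ := exists_mem_candidates_of_mem_lowerNeighbors h; hx.1

theorem toLex_code_lt_of_mem_lowerNeighbors {x y : Omega2.{u}} (h : x ∈ D.lowerNeighbors y) :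
    toLex (D.code y) < toLex (D.code x) :=
  let ⟨_, hx⟩ := exists_mem_candidates_of_mem_lowerNeighbors h; hx.2.2.1

theorem color_eq_one_of_mem_lowerNeighbors {x y : Omega2.{u}} (h : x ∈ D.lowerNeighbors y) :
    D.color x y = 1 := by
  simp [color, h]

theorem mem_lowerNeighbors_of_color_eq_one {x y : Omega2.{u}} (hxy : x < y)
    (h : D.color x y = 1) : x ∈ D.lowerNeighbors y := by
  have hyx : y ∉ D.lowerNeighbors x := fun hy => (lt_of_mem_lowerNeighbors hy).not_gt hxy
  simpa [color, hyx] using h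

theorem candidates_eq_empty {y : Omega2.{u}} {ζ : Iio y}
    (h : Disjoint (D.enum ζ) (D.lowerNeighbors y)) : D.candidates y ζ = ∅ := by
  refine eq_empty_iff_forall_notMem.2 fun x hx => ?_
  have hne : (D.candidates y ζ).Nonempty := ⟨x, hx⟩
  exact disjoint_left.1 h hne.some_mem.2.1 ⟨⟨ζ, hne⟩, rfl⟩

theorem mk_lowerNeighbors_inter_le_aleph0 {s s' : Omega2.{u}} (hs : s ∈ D.lowerNeighbors s') :
    #(D.lowerNeighbors s ∩ D.lowerNeighbors s' : Set Omega2.{u}) ≤ ℵ₀ := by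
  obtain ⟨e, he, hlt⟩ := toLex_code_lt_of_mem_lowerNeighbors hs
  -- A common lower neighbour `x` has `code s < code x`, so it cannot agree with `code s'` up to
  -- `e`, where `code s'` already drops below `code s`.
  have hx (x : (D.lowerNeighbors s ∩ D.lowerNeighbors s' : Set Omega2.{u})) :
      ∃ ζ : {ζ : Iio s' // (D.candidates s' ζ).Nonempty}, ζ.2.some = x ∧ D.index s' ζ < e := by
    obtain ⟨x, hxs, ζ, rfl⟩ := x
    refine ⟨ζ, rfl, lt_of_not_ge fun hle => ?_⟩
    have hagree := ζ.2.some_mem.2.2.2.mono (Iic_subset_Iic.2 hle)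
    exact (toLex_code_lt_of_mem_lowerNeighbors hxs).not_gt
      (toLex_lt_of_eqOn_Iic_left he hlt hagree.symm)
  choose ζ hζx hζe using hx
  have hinj : Function.Injective fun x => (⟨D.index s' (ζ x), hζe x⟩ : Iio e) := by
    intro x x' h
    have hζ : ζ x = ζ x' := Subtype.ext ((D.index s').injective (congrArg Subtype.val h))
    rw [← Subtype.coe_inj, ← hζx, ← hζx, hζ]
  exact (mk_le_of_injective hinj).trans (mk_Iio_omega1_le e)

theorem setOType_ne_of_forall_color_eq_one {Y : Set Omega2.{u}}
    (hY : ∀ x ∈ Y, ∀ y ∈ Y, x ≠ y → D.color x y = 1) :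
    setOType Y ≠ (ℵ₁ : Cardinal.{u}).ord + 2 := by
  intro h
  obtain ⟨a, b, hab, ha⟩ := exists_lt_mk_Iio_eq_of_type_eq_add_two h
  have hnb {x y : Y} (h : x < y) : x.1 ∈ D.lowerNeighbors y :=
    mem_lowerNeighbors_of_color_eq_one h (hY _ x.2 _ y.2 (Subtype.coe_ne_coe.2 h.ne))
  have hcard : #(Iio a) ≤ #(D.lowerNeighbors a ∩ D.lowerNeighbors b : Set Omega2.{u}) :=
    mk_le_of_injective (f := fun x : Iio a => ⟨x.1.1, hnb x.2, hnb (x.2.trans hab)⟩)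
      fun _ _ h => by simpa [Subtype.ext_iff] using h
  rw [ha, card_ord] at hcard
  exact (hcard.trans (mk_lowerNeighbors_inter_le_aleph0 (hnb hab))).not_gt aleph0_lt_aleph_one

theorem toLex_code_lt_of_candidates_eq_empty {y y' : Omega2.{u}} {ζ : Iio y'} (hyy' : y ≠ y')
    (hempty : D.candidates y' ζ = ∅)
    (happrox : ∀ i, ∃ x ∈ D.enum ζ, x < y' ∧ EqOn (D.code x) (D.code y) (Iic i))
    (hy : EqOn (D.code y) (D.code y') (Iic (D.index y' ζ))) :
    toLex (D.code y) < toLex (D.code y') := by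
  have hne : toLex (D.code y) ≠ toLex (D.code y') := fun h => hyy' (D.code_injective h)
  refine hne.lt_or_gt.resolve_right fun ⟨e, he, hlt⟩ => ?_
  have hie : D.index y' ζ < e := lt_of_not_ge fun hle => hlt.ne (hy hle).symm
  obtain ⟨x, hxζ, hxy', hx⟩ := happrox e
  refine (eq_empty_iff_forall_notMem.1 hempty) x
    ⟨hxy', hxζ, toLex_lt_of_eqOn_Iic_right he hlt hx, fun j hj => ?_⟩
  exact (hy hj).symm.trans (hx (mem_Iic.2 (hj.trans hie.le))).symm

theorem mk_inter_Ioi_le_aleph_one (hCH : (2 : Cardinal.{u}) ^ ℵ₀ = ℵ₁) {X : Set Omega2.{u}}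
    {t₀ ζ : Omega2.{u}} (hX : ∀ y ∈ X, Disjoint X (D.lowerNeighbors y))
    (hζ : D.enum ζ = X ∩ Iio t₀)
    (hdense : ∀ x ∈ X, ∀ i, ∃ x' ∈ X ∩ Iio t₀, EqOn (D.code x') (D.code x) (Iic i)) :
    #(X ∩ Ioi (max t₀ ζ) : Set Omega2.{u}) ≤ ℵ₁ := by
  set Z := X ∩ Ioi (max t₀ ζ)
  have hζy (y : Z) : ζ < y.1 := (le_max_right _ _).trans_lt y.2.2
  let g (y : Z) : Σ i : Omega1.{u}, Iic i → Bool :=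
    restrictIic (D.code y) (D.index y ⟨ζ, hζy y⟩)
  have hfiber (v) : #(g ⁻¹' {v}) ≤ ℵ₁ := by
    have hmono : StrictMono (toLex ∘ fun y : g ⁻¹' {v} => D.code y.1.1) := by
      intro y y' hyy'
      obtain ⟨hi, hagree⟩ := eqOn_of_restrictIic_eq (y.2.trans y'.2.symm)
      have happrox (i) : ∃ x ∈ D.enum ζ, x < y'.1.1 ∧ EqOn (D.code x) (D.code y.1.1) (Iic i) := by
        obtain ⟨x, hx, hxy⟩ := hdense y.1.1 y.1.2.1 i
        exact ⟨x, hζ ▸ hx, hx.2.trans ((le_max_left _ _).trans_lt y'.1.2.2), hxy⟩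
      exact toLex_code_lt_of_candidates_eq_empty (show y.1.1 < y'.1.1 from hyy').ne
        (candidates_eq_empty (hζ ▸ (hX _ y'.1.2.1).mono_left inter_subset_left)) happrox
        (hi ▸ hagree)
    exact (mk_le_mk_sigma_add_one_of_strictMono hmono).trans <| add_le_of_le (aleph0_le_aleph 1)
      (mk_sigma_Iic_bool_le hCH) (one_le_aleph0.trans (aleph0_le_aleph 1))
  calc #Z ≤ #(Σ i : Omega1.{u}, Iic i → Bool) * ℵ₁ := mk_le_mk_mul_of_mk_preimage_le g hfiber
    _ ≤ ℵ₁ := mul_le_of_le (aleph0_le_aleph 1) (mk_sigma_Iic_bool_le hCH) le_rfl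

theorem mk_le_aleph_one_of_forall_color_eq_zero (hCH : (2 : Cardinal.{u}) ^ ℵ₀ = ℵ₁)
    {X : Set Omega2.{u}} (hX : ∀ x ∈ X, ∀ y ∈ X, x ≠ y → D.color x y = 0) : #X ≤ ℵ₁ := by
  have hdisj (y) (hy : y ∈ X) : Disjoint X (D.lowerNeighbors y) :=
    disjoint_left.2 fun x hx hxy => by
      simpa [color_eq_one_of_mem_lowerNeighbors hxy] using
        hX x hx y hy (lt_of_mem_lowerNeighbors hxy).ne
  obtain ⟨R, hRX, hRcard, hR⟩ := exists_subset_forall_restrictIic_eq D.code X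
  obtain ⟨t₀, ht₀⟩ := exists_forall_lt_of_mk_le_aleph_one (hRcard.trans (mk_sigma_Iic_bool_le hCH))
  obtain ⟨ζ, hζ⟩ := D.exists_enum_eq (X ∩ Iio t₀)
    ((mk_le_mk_of_subset inter_subset_right).trans (mk_Iio_omega2_le t₀))
  have hdense (x) (hx : x ∈ X) (i) : ∃ x' ∈ X ∩ Iio t₀, EqOn (D.code x') (D.code x) (Iic i) :=
    let ⟨x', hx', h⟩ := hR x hx i; ⟨x', ⟨hRX hx', ht₀ x' hx'⟩, (eqOn_of_restrictIic_eq h).2⟩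
  have hsplit : X ⊆ (X ∩ Ioi (max t₀ ζ)) ∪ Iic (max t₀ ζ) := fun x hx =>
    (le_or_gt x (max t₀ ζ)).elim Or.inr fun h => Or.inl ⟨hx, h⟩
  calc #X ≤ #(X ∩ Ioi (max t₀ ζ) : Set Omega2.{u}) + #(Iic (max t₀ ζ)) :=
        (mk_le_mk_of_subset hsplit).trans (mk_union_le _ _)
    _ ≤ ℵ₁ := add_le_of_le (aleph0_le_aleph 1) (mk_inter_Ioi_le_aleph_one hCH hdisj hζ hdense)
        (mk_Iic_omega2_le _)

end ColoringData

/-- **Erdős–Rado negative result**: assuming `2^ω = ω₁` and `2^{ω₁} = ω₂`, we have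
`ω₂ ↛ (ω₂, ω₁+2)²`. -/
theorem omega2_negative_omega1_add_two
    (hCH : (2 : Cardinal.{0}) ^ ℵ₀ = Cardinal.aleph 1)
    (hCH1 : (2 : Cardinal.{0}) ^ Cardinal.aleph 1 = Cardinal.aleph 2) :
    ∃ c : (Cardinal.aleph 2).ord.ToType → (Cardinal.aleph 2).ord.ToType → Fin 2,
      (∀ x y, c x y = c y x) ∧
      (∀ X : Set (Cardinal.aleph 2).ord.ToType,
        (∀ x ∈ X, ∀ y ∈ X, x ≠ y → c x y = 0) → #X ≠ Cardinal.aleph 2) ∧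
      (∀ Y : Set (Cardinal.aleph 2).ord.ToType,
        (∀ x ∈ Y, ∀ y ∈ Y, x ≠ y → c x y = 1) →
          setOType Y ≠ (Cardinal.aleph 1).ord + 2) := by
  have hCH' : (2 : Cardinal) ^ ℵ₀ = ℵ₁ := by simpa using congrArg lift.{_, 0} hCH
  have hCH1' : (2 : Cardinal) ^ ℵ₁ = ℵ_ 2 := by simpa using congrArg lift.{_, 0} hCH1
  obtain ⟨D⟩ := ColoringData.nonempty hCH1'
  refine ⟨D.color, ColoringData.color_comm, fun X hX => ?_,
    fun Y hY => D.setOType_ne_of_forall_color_eq_one hY⟩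
  exact ((D.mk_le_aleph_one_of_forall_color_eq_zero hCH' hX).trans_lt
    (aleph_lt_aleph.2 one_lt_two)).ne
end
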